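/- arXiv:1611.03511 — 2 statements merged into one kernel-verified Lean document; each statement's English description precedes it below -/
import Mathlib

section
/- Let (αⱼ)_{j∈J} be finitely many complex numbers with Σⱼ |αⱼ|² = 1, let λⱼ, t be real, and suppose that for every pair j ≠ k there is no integer m with (λⱼ − λₖ)t = 2πm (the gaps are nondegenerate modulo 2π). If (1/2)·Σⱼ |αⱼ|⁴ + (1/2)·(1 + Σ_{j≠k} |αⱼ|²|αₖ|² cos((λⱼ−λₖ)t)) = 1, then there exists exactly one index j with αⱼ ≠ 0, i.e. the state Σⱼ αⱼ|λⱼ⟩ is an eigenstate of the Hamiltonian. -/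
/-!
Write `pⱼ = ‖αⱼ‖²`. Since `∑ pⱼ = 1`, the off-diagonal sum `∑_{j ≠ k} pⱼ pₖ` equals `1 - ∑ pⱼ²`,
so the purity condition says `∑_{j ≠ k} pⱼ pₖ (1 - cos ((λⱼ - λₖ) t)) = 0`. The gap condition makes
every cosine strictly less than `1`, so all the nonnegative terms `pⱼ pₖ` with `j ≠ k` vanish:
at most one `αⱼ` is nonzero, and the normalization forces one to be.
-/

open Finset

theorem Finset.sum_sum_ite_ne {ι R : Type*} [AddCommGroup R] [DecidableEq ι] (s : Finset ι)
    (f : ι → ι → R) :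
    ∑ j ∈ s, ∑ k ∈ s, (if j ≠ k then f j k else 0) = ∑ j ∈ s, ∑ k ∈ s, f j k - ∑ j ∈ s, f j j := by
  rw [← sum_sub_distrib]
  refine sum_congr rfl fun j hj => ?_
  rw [← sum_filter, filter_ne, sum_erase_eq_sub hj]

theorem Finset.sum_sum_ite_ne_mul {ι R : Type*} [CommRing R] [DecidableEq ι] (s : Finset ι)
    (p : ι → R) :
    ∑ j ∈ s, ∑ k ∈ s, (if j ≠ k then p j * p k else 0) = (∑ j ∈ s, p j) ^ 2 - ∑ j ∈ s, p j ^ 2 := by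
  simp only [sum_sum_ite_ne, sq, sum_mul_sum]

open Real in
theorem Real.cos_lt_one_of_forall_ne_two_pi_mul {x : ℝ} (hx : ∀ m : ℤ, x ≠ 2 * π * m) :
    cos x < 1 := by
  refine (cos_le_one x).lt_of_ne fun h => ?_
  obtain ⟨m, hm⟩ := (cos_eq_one_iff x).mp h
  exact hx m (by rw [← hm]; ring)

theorem eq_zero_of_sum_sum_ite_ne_mul_eq {ι : Type*} [Fintype ι] [DecidableEq ι]
    {w c : ι → ι → ℝ} (hw : ∀ j k, 0 ≤ w j k) (hc : ∀ j k, j ≠ k → c j k < 1)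
    (hsum : ∑ j, ∑ k, (if j ≠ k then w j k * c j k else 0) = ∑ j, ∑ k, (if j ≠ k then w j k else 0))
    {j k : ι} (hjk : j ≠ k) : w j k = 0 := by
  set d : ι × ι → ℝ := fun x => if x.1 ≠ x.2 then w x.1 x.2 * (1 - c x.1 x.2) else 0
  have hd : 0 ≤ d := fun x => by
    dsimp only [d]
    split_ifs with hx
    exacts [mul_nonneg (hw _ _) (sub_nonneg.mpr (hc _ _ hx).le), le_rfl]
  have hd_sum : ∑ x, d x = 0 := by
    rw [Fintype.sum_prod_type' (fun j k => d (j, k)), ← sub_eq_zero.mpr hsum.symm,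
      ← sum_sub_distrib]
    refine sum_congr rfl fun j _ => ?_
    rw [← sum_sub_distrib]
    refine sum_congr rfl fun k _ => ?_
    dsimp only [d]
    split_ifs <;> ring
  have hd_jk := congrFun ((Fintype.sum_eq_zero_iff_of_nonneg hd).mp hd_sum) (j, k)
  simp only [d, if_pos hjk, Pi.zero_apply, mul_eq_zero, sub_eq_zero] at hd_jk
  exact hd_jk.resolve_right (hc j k hjk).ne'

theorem existsUnique_ne_zero_of_pairwise {ι M : Type*} [Zero M] {f : ι → M}
    (hpair : ∀ j k, j ≠ k → f j = 0 ∨ f k = 0) (hex : ∃ j, f j ≠ 0) : ∃! j, f j ≠ 0 := by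
  obtain ⟨j, hj⟩ := hex
  refine ⟨j, hj, fun k hk => ?_⟩
  by_contra hkj
  exact (hpair k j hkj).elim hk hj

theorem purity_one_implies_eigenstate {N : ℕ} (α : Fin N → ℂ) (lam : Fin N → ℝ) (t : ℝ)
    (hnorm : ∑ j, ‖α j‖ ^ 2 = 1)
    (hgap : ∀ j k : Fin N, j ≠ k → ∀ m : ℤ, (lam j - lam k) * t ≠ 2 * Real.pi * m)
    (hpur : (1 / 2) * ∑ j, ‖α j‖ ^ 4
      + (1 / 2) * (1 + ∑ j, ∑ k, if j ≠ k then
          ‖α j‖ ^ 2 * ‖α k‖ ^ 2 *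
            Real.cos ((lam j - lam k) * t) else 0) = 1) :
    ∃! j : Fin N, α j ≠ 0 := by
  have hoffDiag : ∑ j, ∑ k, (if j ≠ k then ‖α j‖ ^ 2 * ‖α k‖ ^ 2 else 0)
      = 1 - ∑ j, ‖α j‖ ^ 4 := by
    rw [sum_sum_ite_ne_mul, hnorm]
    norm_num [← pow_mul]
  have hprod : ∀ j k, j ≠ k → ‖α j‖ ^ 2 * ‖α k‖ ^ 2 = 0 := fun j k =>
    eq_zero_of_sum_sum_ite_ne_mul_eq (w := fun j k => ‖α j‖ ^ 2 * ‖α k‖ ^ 2)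
      (fun j k => by positivity)
      (fun j k hjk => Real.cos_lt_one_of_forall_ne_two_pi_mul (hgap j k hjk))
      (by linarith)
  refine existsUnique_ne_zero_of_pairwise (fun j k hjk => ?_) ?_
  · simpa using hprod j k hjk
  · obtain ⟨j, -, hj⟩ := exists_ne_zero_of_sum_ne_zero (hnorm.symm ▸ one_ne_zero)
    exact ⟨j, by simpa using hj⟩
end

section
/- Let (pⱼ) be nonnegative reals with Σⱼ pⱼ = 1, let λⱼ, t be real with max_{j,k} |λⱼ − λₖ|·t ≤ π/2 and t ≥ 0. Then (1/2)·(1 + Σ_{j,k} pⱼ pₖ cos((λⱼ−λₖ)t)) ≤ (1/2)·(1 + cos(Σ_{j,k} pⱼ pₖ |λⱼ − λₖ| t)). Consequently the purity of the control qubit is bounded above by a monotonically decreasing function of the average eigenvalue gap. -/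
open Finset

theorem purity_upper_bound_jensen {N : ℕ} (p : Fin N → ℝ) (lam : Fin N → ℝ) (t : ℝ)
    (hp : ∀ j, 0 ≤ p j) (hsum : ∑ j, p j = 1) (ht : 0 ≤ t)
    (hgap : ∀ j k : Fin N, |lam j - lam k| * t ≤ Real.pi / 2) :
    (1 / 2) * (1 + ∑ j, ∑ k, p j * p k * Real.cos ((lam j - lam k) * t))
      ≤ (1 / 2) * (1 + Real.cos (∑ j, ∑ k, p j * p k * |lam j - lam k| * t)) := by
  have hwsum : ∑ q : Fin N × Fin N, p q.1 * p q.2 = 1 := by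
    rw [Fintype.sum_prod_type]
    simp [← Finset.mul_sum, hsum]
  have hconc : ConcaveOn ℝ (Set.Icc (-(Real.pi/2)) (Real.pi/2)) Real.cos :=
    strictConcaveOn_cos_Icc.concaveOn
  have key := hconc.le_map_sum (t := (Finset.univ : Finset (Fin N × Fin N)))
    (w := fun q => p q.1 * p q.2) (p := fun q => |lam q.1 - lam q.2| * t)
    (fun q _ => mul_nonneg (hp _) (hp _)) hwsum
    (fun q _ => ⟨le_trans (neg_nonpos.2 (le_of_lt (by positivity)))
      (mul_nonneg (abs_nonneg _) ht), hgap _ _⟩)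
  simp only [smul_eq_mul] at key
  have h1 : (∑ j, ∑ k, p j * p k * Real.cos ((lam j - lam k) * t))
      = ∑ q : Fin N × Fin N, p q.1 * p q.2 * Real.cos (|lam q.1 - lam q.2| * t) := by
    rw [Fintype.sum_prod_type]
    refine Finset.sum_congr rfl fun j _ => Finset.sum_congr rfl fun k _ => ?_
    rw [← Real.cos_abs, abs_mul, abs_of_nonneg ht]
  have h2 : (∑ j, ∑ k, p j * p k * |lam j - lam k| * t)
      = ∑ q : Fin N × Fin N, p q.1 * p q.2 * (|lam q.1 - lam q.2| * t) := by
    rw [Fintype.sum_prod_type]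
    exact Finset.sum_congr rfl fun j _ => Finset.sum_congr rfl fun k _ => (mul_assoc _ _ _)
  rw [h1, h2]
  linarith [key]
end
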